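/- Let k be real, let {φ_V : V ∈ Γ} be a parabolic cocycle of weight −k in 𝒫 with φ_S = 0, let k' be a positive even integer, and let w be a multiplier system of weight k' for Γ satisfying |w(V)| ≤ K μ(V)^α for all V ∈ Γ, where μ(V) = a²+b²+c²+d². Let Θ be a complete set of representatives of the right cosets of Γ_∞ in Γ, and suppose the cocycle estimate holds: there exist constants K₁* > 0 and e > 0 (with η = 6e − 2k) such that |φ_V(z) · conj(w(V)) · (cz+d)^{−k'}| ≤ K₁*(c²+d²)^{e+1+α−k'/2}(|z|^η + y^{−η}) for all V = (a b; c d) ∈ Θ and all z = x+iy ∈ ℍ. Then for k' > ψ := 2e + 4 + 2α the generalized Poincaré series Ψ(z) = Σ_{V∈Θ} φ_V(z) · conj(w(V)) · (cz+d)^{−k'} converges absolutely for every z ∈ ℍ, and Ψ ∈ 𝒫, i.e., Ψ is holomorphic on ℍ and satisfies |Ψ(z)| < K'(|z|^{ρ'} + y^{−σ'}) for some positive constants K', ρ', σ'. -/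

import Mathlib

open Complex ComplexConjugate

noncomputable section

abbrev SL2Z := Matrix.SpecialLinearGroup (Fin 2) ℤ

/-- The (i,j) entry of an element of SL(2,ℤ). -/
def entry (M : SL2Z) (i j : Fin 2) : ℤ := (M : Matrix (Fin 2) (Fin 2) ℤ) i j

/-- The argument of a complex number, normalized to lie in [-π, π). -/
def parg (w : ℂ) : ℝ := if Complex.arg w = Real.pi then -Real.pi else Complex.arg w

/-- The principal power `w^k = |w|^k e^{i k arg w}`, with `-π ≤ arg w < π`. -/
def ppow (w : ℂ) (k : ℝ) : ℂ :=
  ((‖w‖ ^ k : ℝ) : ℂ) * Complex.exp (Complex.I * (k : ℂ) * (parg w : ℂ))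

/-- `cz + d`, for the bottom row (c, d) of M. -/
def denom (M : SL2Z) (z : ℂ) : ℂ := (entry M 1 0 : ℂ) * z + (entry M 1 1 : ℂ)

/-- The Möbius action `Mz = (az+b)/(cz+d)`. -/
def moeb (M : SL2Z) (z : ℂ) : ℂ :=
  ((entry M 0 0 : ℂ) * z + (entry M 0 1 : ℂ)) / denom M z

/-- `μ(V) = a² + b² + c² + d²`. -/
def muSL (M : SL2Z) : ℤ :=
  (entry M 0 0) ^ 2 + (entry M 0 1) ^ 2 + (entry M 1 0) ^ 2 + (entry M 1 1) ^ 2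

/-- A multiplier system of weight `k` for `Γ`: nonvanishing and the consistency condition
`v(M₁M₂)(c₃z+d₃)^k = v(M₁)v(M₂)(c₁M₂z+d₁)^k(c₂z+d₂)^k` on the upper half-plane. -/
def IsMultiplier (Γ : Subgroup SL2Z) (k : ℝ) (v : Γ → ℂ) : Prop :=
  (∀ M : Γ, v M ≠ 0) ∧
  ∀ M₁ M₂ : Γ, ∀ z : ℂ, 0 < z.im →
    v (M₁ * M₂) * ppow (denom ((M₁ * M₂ : Γ) : SL2Z) z) k =
      v M₁ * v M₂ * ppow (denom (M₁ : SL2Z) (moeb (M₂ : SL2Z) z)) k *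
        ppow (denom (M₂ : SL2Z) z) k

/-- A parabolic element of SL(2,ℤ): trace ±2 and not ±I. -/
def IsParabolicMat (M : SL2Z) : Prop :=
  (Matrix.trace (M : Matrix (Fin 2) (Fin 2) ℤ) = 2 ∨
    Matrix.trace (M : Matrix (Fin 2) (Fin 2) ℤ) = -2) ∧
  (M : Matrix (Fin 2) (Fin 2) ℤ) ≠ 1 ∧ (M : Matrix (Fin 2) (Fin 2) ℤ) ≠ -1

/-- `v` is weakly parabolic: `|v(P)| = 1` for all parabolic `P ∈ Γ`. -/
def WeaklyParabolic (Γ : Subgroup SL2Z) (v : Γ → ℂ) : Prop :=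
  ∀ M : Γ, IsParabolicMat (M : SL2Z) → ‖v M‖ = 1

/-- The weight `−k` stroke operator: `(F∣_v^{-k}M)(z) = v(M)⁻¹ (cz+d)^k F(Mz)`. -/
def stroke (Γ : Subgroup SL2Z) (k : ℝ) (v : Γ → ℂ) (F : ℂ → ℂ) (M : Γ) (z : ℂ) : ℂ :=
  (v M)⁻¹ * ppow (denom (M : SL2Z) z) k * F (moeb (M : SL2Z) z)

/-- Membership in the space `𝒫`: holomorphic on ℍ with
`|g(z)| < K(|z|^ρ + y^{−σ})` for some positive constants `K, ρ, σ`. -/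
def MemP (g : ℂ → ℂ) : Prop :=
  (∀ z : ℂ, 0 < z.im → DifferentiableAt ℂ g z) ∧
  ∃ K ρ σ : ℝ, 0 < K ∧ 0 < ρ ∧ 0 < σ ∧
    ∀ z : ℂ, 0 < z.im → ‖g z‖ < K * (‖z‖ ^ ρ + z.im ^ (-σ))

/-- A cocycle of weight `−k` with multiplier `v`, with values in `𝒫`. -/
def IsCocycle (Γ : Subgroup SL2Z) (k : ℝ) (v : Γ → ℂ) (ρ : Γ → ℂ → ℂ) : Prop :=
  (∀ M : Γ, MemP (ρ M)) ∧
  ∀ M₁ M₂ : Γ, ∀ z : ℂ, 0 < z.im →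
    ρ (M₁ * M₂) z = stroke Γ k v (ρ M₁) M₂ z + ρ M₂ z

/-- Parabolicity of a cocycle `ρ` at a parabolic generator `Q`:
`ρ_Q = ρ_h ∣ Q − ρ_h` for some `ρ_h ∈ 𝒫`. -/
def IsParabolicAt (Γ : Subgroup SL2Z) (k : ℝ) (v : Γ → ℂ) (ρ : Γ → ℂ → ℂ) (Q : Γ) : Prop :=
  ∃ g : ℂ → ℂ, MemP g ∧ ∀ z : ℂ, 0 < z.im → ρ Q z = stroke Γ k v g Q z - g z

/-- `M = (1 λ; 0 1)`. -/
def IsTranslationOf (M : SL2Z) (lam : ℤ) : Prop :=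
  entry M 0 0 = 1 ∧ entry M 0 1 = lam ∧ entry M 1 0 = 0 ∧ entry M 1 1 = 1

/-- The generalized Poincaré series `Ψ(z) = Σ_{V∈Θ} φ_V(z) conj(w(V)) (cz+d)^{−k'}`. -/
def poincareSeries (Γ : Subgroup SL2Z) (Θ : Set Γ) (w : Γ → ℂ) (k' : ℝ)
    (φ : Γ → ℂ → ℂ) (z : ℂ) : ℂ :=
  ∑' V : Θ, φ (V : Γ) z * conj (w (V : Γ)) * ppow (denom ((V : Γ) : SL2Z) z) (-k')

/-- The generalized Eisenstein series `g(z) = Σ_{V∈Θ} conj(w(V)) (cz+d)^{−k'}`. -/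
def genEisenstein (Γ : Subgroup SL2Z) (Θ : Set Γ) (w : Γ → ℂ) (k' : ℝ) (z : ℂ) : ℂ :=
  ∑' V : Θ, conj (w (V : Γ)) * ppow (denom ((V : Γ) : SL2Z) z) (-k')


/-! By the cocycle estimate the `V`-th term is at most `K₁ (c² + d²)^s (|z|^η + y^{-η})`, where
`s = e + 1 + α - k'/2 < -1`. Two elements of `Γ` with the same bottom row differ on the left by a
power of `T`, and two coset representatives differ by a power of `S = T^λ` only if they are equal,
so each bottom row occurs at most `λ` times in `Θ`. Hence `∑_{V ∈ Θ} (c² + d²)^s` is dominated by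
`λ ∑_{(c,d)} (c² + d²)^s < ∞`. The majorant is uniform near every point of `ℍ`, which gives
holomorphy, and it has the shape `C (|z|^η + y^{-η})` required in `𝒫`. -/

lemma exp_I_mul_parg (w : ℂ) : exp (I * parg w) = exp (w.arg * I) := by
  unfold parg
  split_ifs with h
  · rw [h, mul_comm I, ofReal_neg, neg_mul, exp_neg, exp_pi_mul_I]
    norm_num
  · rw [mul_comm]

lemma ppow_intCast (w : ℂ) (n : ℤ) : ppow w n = w ^ n := by
  have hnorm : ((‖w‖ ^ (n : ℝ) : ℝ) : ℂ) = (‖w‖ : ℂ) ^ n := by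
    rw [Real.rpow_intCast]; push_cast; rfl
  have hexp : exp (I * (n : ℝ) * parg w) = exp (I * parg w) ^ n := by
    rw [← exp_int_mul]; push_cast; ring_nf
  rw [ppow, hnorm, hexp, exp_I_mul_parg, ← mul_zpow, norm_mul_exp_arg_mul_I]

lemma entry_det (M : SL2Z) : entry M 0 0 * entry M 1 1 - entry M 0 1 * entry M 1 0 = 1 := by
  have h := M.det_coe
  rwa [Matrix.det_fin_two] at h

lemma denom_ne_zero (M : SL2Z) {z : ℂ} (hz : 0 < z.im) : denom M z ≠ 0 := by
  intro h
  have hc : entry M 1 0 = 0 := by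
    have := congrArg im h
    simp only [denom, add_im, mul_im, intCast_re, intCast_im, zero_mul, add_zero] at this
    exact_mod_cast (mul_eq_zero.mp this).resolve_right hz.ne'
  have hd : entry M 1 1 = 0 := by simpa [denom, hc] using h
  simpa [hc, hd] using entry_det M

lemma differentiableAt_ppow_denom (M : SL2Z) (n : ℤ) {z : ℂ} (hz : 0 < z.im) :
    DifferentiableAt ℂ (fun z => ppow (denom M z) n) z := by
  simp only [ppow_intCast, denom]
  exact ((differentiableAt_id.const_mul _).add_const _).zpow (.inl (denom_ne_zero M hz))

def bottomRow (M : SL2Z) : ℤ × ℤ := (entry M 1 0, entry M 1 1)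

lemma eq_T_zpow_of_bottomRow {g : SL2Z} (hc : entry g 1 0 = 0) (hd : entry g 1 1 = 1) :
    g = ModularGroup.T ^ entry g 0 1 := by
  have ha : entry g 0 0 = 1 := by simpa [hc, hd] using entry_det g
  ext i j
  fin_cases i <;> fin_cases j <;> simp_all [entry, ModularGroup.coe_T_zpow]

lemma mul_inv_eq_T_zpow_of_bottomRow_eq {V W : SL2Z} (h : bottomRow V = bottomRow W) :
    V * W⁻¹ = ModularGroup.T ^ entry (V * W⁻¹) 0 1 := by
  obtain ⟨hc, hd⟩ := Prod.ext_iff.mp h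
  have hW := entry_det W
  apply eq_T_zpow_of_bottomRow <;>
    simp only [bottomRow, entry, Matrix.SpecialLinearGroup.coe_mul,
      Matrix.SpecialLinearGroup.coe_inv, Matrix.adjugate_fin_two, Matrix.mul_apply,
      Fin.sum_univ_two, Matrix.of_apply, Matrix.cons_val', Matrix.cons_val_zero,
      Matrix.cons_val_one, Matrix.empty_val', Matrix.cons_val_fin_one] at * <;>
    rw [hc, hd]
  · ring
  · linear_combination hW

lemma IsTranslationOf.eq_T_zpow {M : SL2Z} {lam : ℤ} (hM : IsTranslationOf M lam) :
    M = ModularGroup.T ^ lam := by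
  obtain ⟨-, hb, hc, hd⟩ := hM
  rw [eq_T_zpow_of_bottomRow hc hd, hb]

lemma summable_comp_of_card_fiber_le {ι β : Type*} {f : β → ℝ} (hf0 : 0 ≤ f)
    (hf : Summable f) {r : ι → β} {N : ℕ}
    (hr : ∀ (b : β) (u : Finset ι), (∀ i ∈ u, r i = b) → u.card ≤ N) :
    Summable (f ∘ r) := by
  classical
  refine summable_of_sum_le (c := N * ∑' b, f b) (fun i => hf0 (r i)) fun u => ?_
  rw [← Finset.sum_fiberwise_of_maps_to (fun i hi => Finset.mem_image_of_mem r hi)]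
  calc ∑ b ∈ u.image r, ∑ i ∈ u with r i = b, f (r i)
      = ∑ b ∈ u.image r, (u.filter (r · = b)).card * f b := by
        refine Finset.sum_congr rfl fun b _ => ?_
        rw [Finset.sum_congr rfl fun i hi => by rw [(Finset.mem_filter.mp hi).2],
          Finset.sum_const, nsmul_eq_mul]
    _ ≤ ∑ b ∈ u.image r, N * f b := by
        gcongr with b
        · exact hf0 b
        · exact_mod_cast hr b _ fun i hi => (Finset.mem_filter.mp hi).2
    _ ≤ N * ∑' b, f b := by
        rw [← Finset.mul_sum]
        gcongr
        exact hf.sum_le_tsum _ fun b _ => hf0 b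

lemma summable_sq_add_sq_rpow {s : ℝ} (hs : s < -1) :
    Summable fun p : ℤ × ℤ => ((p.1 ^ 2 + p.2 ^ 2 : ℤ) : ℝ) ^ s := by
  have hsup : Summable fun p : ℤ × ℤ => ‖(![p.1, p.2] : Fin 2 → ℤ)‖ ^ (2 * s) := by
    have := EisensteinSeries.summable_one_div_norm_rpow (k := -(2 * s)) (by linarith)
    rw [← (finTwoArrowEquiv ℤ).symm.summable_iff] at this
    simpa [Function.comp_def] using this
  refine hsup.of_nonneg_of_le (fun p => by positivity) fun p => ?_
  rcases eq_or_ne p 0 with rfl | hp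
  · simp [Real.zero_rpow (by linarith : s ≠ 0)]
    positivity
  have hmax : ‖(![p.1, p.2] : Fin 2 → ℤ)‖ ^ 2 ≤ ((p.1 ^ 2 + p.2 ^ 2 : ℤ) : ℝ) := by
    rw [EisensteinSeries.norm_eq_max_natAbs]
    push_cast [Nat.cast_natAbs]
    rcases max_cases |(p.1 : ℝ)| |(p.2 : ℝ)| with ⟨h, -⟩ | ⟨h, -⟩ <;> rw [h, sq_abs] <;>
      linarith [sq_nonneg (p.1 : ℝ), sq_nonneg (p.2 : ℝ)]
  have hpos : 0 < ‖(![p.1, p.2] : Fin 2 → ℤ)‖ := by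
    refine norm_pos_iff.mpr fun h => hp (Prod.ext ?_ ?_)
    · simpa using congrFun h 0
    · simpa using congrFun h 1
  calc ((p.1 ^ 2 + p.2 ^ 2 : ℤ) : ℝ) ^ s ≤ (‖(![p.1, p.2] : Fin 2 → ℤ)‖ ^ 2) ^ s :=
        Real.rpow_le_rpow_of_nonpos (by positivity) hmax (by linarith)
    _ = ‖(![p.1, p.2] : Fin 2 → ℤ)‖ ^ (2 * s) := by
        rw [← Real.rpow_natCast, ← Real.rpow_mul hpos.le, Nat.cast_ofNat]

section CosetRepresentatives

variable {Γ : Subgroup SL2Z} {S : Γ} {Θ : Set Γ}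

lemma eq_of_mul_inv_mem_zpowers (hΘ : ∀ V : Γ, ∃! W : Γ, W ∈ Θ ∧ V * W⁻¹ ∈ Subgroup.zpowers S)
    {V₁ V₂ : Γ} (h₁ : V₁ ∈ Θ) (h₂ : V₂ ∈ Θ) (h : V₁ * V₂⁻¹ ∈ Subgroup.zpowers S) : V₁ = V₂ :=
  (hΘ V₁).unique ⟨h₁, by simp [one_mem]⟩ ⟨h₂, h⟩

lemma card_le_of_bottomRow_eq {lam : ℤ} (hlam : 0 < lam) (hS : IsTranslationOf (S : SL2Z) lam)
    (hΘ : ∀ V : Γ, ∃! W : Γ, W ∈ Θ ∧ V * W⁻¹ ∈ Subgroup.zpowers S)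
    (W₀ : SL2Z) (u : Finset Θ) (hu : ∀ V ∈ u, bottomRow (V : Γ) = bottomRow W₀) :
    u.card ≤ lam.toNat := by
  set m : Θ → ℤ := fun V => entry ((V : Γ) * W₀⁻¹) 0 1
  have hT : ∀ V ∈ u, ((V : Γ) : SL2Z) * W₀⁻¹ = ModularGroup.T ^ m V := fun V hV =>
    mul_inv_eq_T_zpow_of_bottomRow_eq (hu V hV)
  refine (Finset.card_le_card_of_injOn (fun V => m V % lam) (t := Finset.Ico 0 lam)
    (fun V _ => ?_) fun V₁ h₁ V₂ h₂ heq => ?_).trans (by simp)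
  · simp [Int.emod_nonneg _ hlam.ne', Int.emod_lt_of_pos _ hlam]
  obtain ⟨j, hj⟩ : lam ∣ m V₁ - m V₂ := Int.ModEq.dvd (Eq.symm heq)
  have hS_pow : (((V₁ : Γ) * (V₂ : Γ)⁻¹ : Γ) : SL2Z) = ((S ^ j : Γ) : SL2Z) := by
    calc (((V₁ : Γ) * (V₂ : Γ)⁻¹ : Γ) : SL2Z)
        = (((V₁ : Γ) : SL2Z) * W₀⁻¹) * (((V₂ : Γ) : SL2Z) * W₀⁻¹)⁻¹ := by push_cast; group
      _ = ModularGroup.T ^ (lam * j) := by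
        rw [hT V₁ h₁, hT V₂ h₂, ← zpow_neg, ← zpow_add, ← hj, sub_eq_add_neg]
      _ = ((S ^ j : Γ) : SL2Z) := by rw [zpow_mul, ← hS.eq_T_zpow]; push_cast; rfl
  exact Subtype.ext (eq_of_mul_inv_mem_zpowers hΘ V₁.2 V₂.2
    ⟨j, Subtype.ext hS_pow.symm⟩)

lemma summable_bottomRow_rpow {lam : ℤ} (hlam : 0 < lam) (hS : IsTranslationOf (S : SL2Z) lam)
    (hΘ : ∀ V : Γ, ∃! W : Γ, W ∈ Θ ∧ V * W⁻¹ ∈ Subgroup.zpowers S) {s : ℝ} (hs : s < -1) :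
    Summable fun V : Θ =>
      ((((entry (V : SL2Z) 1 0) ^ 2 + (entry (V : SL2Z) 1 1) ^ 2 : ℤ)) : ℝ) ^ s := by
  refine summable_comp_of_card_fiber_le (f := fun p : ℤ × ℤ => ((p.1 ^ 2 + p.2 ^ 2 : ℤ) : ℝ) ^ s)
    (r := fun V : Θ => bottomRow (V : Γ)) (N := lam.toNat) (fun p => by positivity)
    (summable_sq_add_sq_rpow hs) fun p u hu => ?_
  rcases u.eq_empty_or_nonempty with rfl | ⟨W, hW⟩
  · simp
  exact card_le_of_bottomRow_eq hlam hS hΘ _ u fun V hV => (hu V hV).trans (hu W hW).symm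

end CosetRepresentatives

lemma rpow_le_rpow_add_rpow_neg {u x y t ρ : ℝ} (hy : 0 < y) (hyu : y ≤ u) (hux : u ≤ x)
    (ht : |t| ≤ ρ) : u ^ t ≤ x ^ ρ + y ^ (-ρ) := by
  have hu : 0 < u := hy.trans_le hyu
  have hρ : 0 ≤ ρ := (abs_nonneg t).trans ht
  rcases le_or_gt 1 u with h1 | h1
  · calc u ^ t ≤ u ^ ρ := Real.rpow_le_rpow_of_exponent_le h1 ((le_abs_self t).trans ht)
      _ ≤ x ^ ρ := Real.rpow_le_rpow hu.le hux hρ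
      _ ≤ x ^ ρ + y ^ (-ρ) := le_add_of_nonneg_right (by positivity)
  · calc u ^ t ≤ u ^ (-ρ) :=
          Real.rpow_le_rpow_of_exponent_ge hu h1.le (neg_le.mp ((neg_le_abs t).trans ht))
      _ ≤ y ^ (-ρ) := Real.rpow_le_rpow_of_nonpos hy hyu (neg_nonpos.mpr hρ)
      _ ≤ x ^ ρ + y ^ (-ρ) := le_add_of_nonneg_left (Real.rpow_nonneg (hu.le.trans hux) ρ)

lemma memP_of_norm_le {g : ℂ → ℂ} (hg : ∀ z : ℂ, 0 < z.im → DifferentiableAt ℂ g z) (C η : ℝ)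
    (hC : ∀ z : ℂ, 0 < z.im → ‖g z‖ ≤ C * (‖z‖ ^ η + z.im ^ (-η))) : MemP g := by
  refine ⟨hg, 2 * |C| + 1, |η| + 1, |η| + 1, by positivity, by positivity, by positivity,
    fun z hz => ?_⟩
  have hyz : z.im ≤ ‖z‖ := (le_abs_self _).trans (abs_im_le_norm z)
  have hρ : |η| ≤ |η| + 1 := le_add_of_nonneg_right zero_le_one
  set B := ‖z‖ ^ (|η| + 1) + z.im ^ (-(|η| + 1))
  have hB : 0 < B := add_pos_of_nonneg_of_pos (by positivity) (by positivity)
  have h₁ : ‖z‖ ^ η ≤ B := rpow_le_rpow_add_rpow_neg hz hyz le_rfl hρ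
  have h₂ : z.im ^ (-η) ≤ B := rpow_le_rpow_add_rpow_neg hz le_rfl hyz (by rwa [abs_neg])
  calc ‖g z‖ ≤ C * (‖z‖ ^ η + z.im ^ (-η)) := hC z hz
    _ ≤ |C| * (2 * B) := by
        refine (le_abs_self _).trans ?_
        rw [abs_mul]
        gcongr
        rw [abs_of_nonneg (by positivity)]
        linarith
    _ < (2 * |C| + 1) * B := by nlinarith

lemma continuousOn_norm_rpow_add_im_rpow (η : ℝ) :
    ContinuousOn (fun z : ℂ => ‖z‖ ^ η + z.im ^ (-η)) {z : ℂ | 0 < z.im} := by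
  intro z hz
  have hnorm : ‖z‖ ≠ 0 := (hz.trans_le ((le_abs_self _).trans (abs_im_le_norm z))).ne'
  exact ((continuous_norm.continuousAt.rpow_const (.inl hnorm)).add
    (continuous_im.continuousAt.rpow_const (.inl hz.ne'))).continuousWithinAt

lemma differentiableOn_tsum_of_norm_le_mul {ι : Type*} {F : ι → ℂ → ℂ} {U : Set ℂ}
    {a : ι → ℝ} {g : ℂ → ℝ} (ha : Summable a) (ha0 : ∀ i, 0 ≤ a i) (hg : ContinuousOn g U)
    (hU : IsOpen U) (hF : ∀ i, DifferentiableOn ℂ (F i) U)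
    (hle : ∀ i, ∀ z ∈ U, ‖F i z‖ ≤ a i * g z) :
    DifferentiableOn ℂ (fun z => ∑' i, F i z) U := by
  intro z₀ hz₀
  set W := U ∩ g ⁻¹' Set.Iio (g z₀ + 1)
  have hW : IsOpen W := hg.isOpen_inter_preimage hU isOpen_Iio
  have hz₀W : z₀ ∈ W := ⟨hz₀, by simp⟩
  have hdiff : DifferentiableOn ℂ (fun z => ∑' i, F i z) W :=
    differentiableOn_tsum_of_summable_norm (ha.mul_right (g z₀ + 1))
      (fun i => (hF i).mono Set.inter_subset_left) hW fun i z hz =>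
        (hle i z hz.1).trans (mul_le_mul_of_nonneg_left (le_of_lt hz.2) (ha0 i))
  exact (hdiff.differentiableAt (hW.mem_nhds hz₀W)).differentiableWithinAt

theorem poincare_series_converges_and_mem_P_general
    (Γ : Subgroup SL2Z)
    (k : ℝ) (v : Γ → ℂ)
    (lam : ℤ) (hlam : 0 < lam) (S : Γ) (hS : IsTranslationOf (S : SL2Z) lam)
    (φ : Γ → ℂ → ℂ) (hφ : IsCocycle Γ k v φ)
    (k' : ℕ)
    (w : Γ → ℂ)
    (α : ℝ)
    (Θ : Set Γ)
    (hΘ : ∀ V : Γ, ∃! W : Γ, W ∈ Θ ∧ V * W⁻¹ ∈ Subgroup.zpowers S)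
    (K₁ e : ℝ) (hK₁ : 0 < K₁)
    (hest : ∀ V ∈ Θ, ∀ z : ℂ, 0 < z.im →
      ‖φ V z * conj (w V) * ppow (denom (V : SL2Z) z) (-(k' : ℝ))‖ ≤
        K₁ * ((((entry (V : SL2Z) 1 0) ^ 2 + (entry (V : SL2Z) 1 1) ^ 2 : ℤ)) : ℝ) ^
            (e + 1 + α - (k' : ℝ) / 2) *
          (‖z‖ ^ (6 * e - 2 * k) + z.im ^ (-(6 * e - 2 * k))))
    (hψ : 2 * e + 4 + 2 * α < (k' : ℝ)) :
    (∀ z : ℂ, 0 < z.im →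
      Summable (fun V : Θ =>
        ‖φ (V : Γ) z * conj (w (V : Γ)) *
          ppow (denom ((V : Γ) : SL2Z) z) (-(k' : ℝ))‖)) ∧
    MemP (poincareSeries Γ Θ w (k' : ℝ) φ) := by
  set η := 6 * e - 2 * k
  set a : Θ → ℝ := fun V => K₁ *
    ((((entry ((V : Γ) : SL2Z) 1 0) ^ 2 + (entry ((V : Γ) : SL2Z) 1 1) ^ 2 : ℤ)) : ℝ) ^
      (e + 1 + α - (k' : ℝ) / 2)
  have ha : Summable a := (summable_bottomRow_rpow hlam hS hΘ (by linarith)).mul_left K₁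
  have ha0 (V : Θ) : 0 ≤ a V := mul_nonneg hK₁.le (by positivity)
  have hle (V : Θ) : ∀ z ∈ {z : ℂ | 0 < z.im}, ‖φ V z * conj (w V) *
      ppow (denom ((V : Γ) : SL2Z) z) (-(k' : ℝ))‖ ≤ a V * (‖z‖ ^ η + z.im ^ (-η)) :=
    hest V V.2
  have hterm (V : Θ) : DifferentiableOn ℂ (fun z => φ V z * conj (w V) *
      ppow (denom ((V : Γ) : SL2Z) z) (-(k' : ℝ))) {z : ℂ | 0 < z.im} := fun z hz =>
    (((hφ.1 V).1 z hz).mul_const _ |>.mul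
      (by exact_mod_cast differentiableAt_ppow_denom _ (-(k' : ℤ)) hz)).differentiableWithinAt
  refine ⟨fun z hz => (ha.mul_right _).of_nonneg_of_le (fun _ => norm_nonneg _)
    fun V => hle V z hz, memP_of_norm_le (fun z hz => ?_) (∑' V, a V) η fun z hz => ?_⟩
  · exact (differentiableOn_tsum_of_norm_le_mul ha ha0 (continuousOn_norm_rpow_add_im_rpow η)
      UpperHalfPlane.isOpen_upperHalfPlaneSet hterm hle).differentiableAt
      (UpperHalfPlane.isOpen_upperHalfPlaneSet.mem_nhds hz)
  · exact tsum_of_norm_bounded (ha.hasSum.mul_right _) fun V => hle V z hz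

/-- Convergence of the generalized Poincaré series: under the cocycle
estimate, for `k' > ψ = 2e + 4 + 2α` the series `Ψ(z) = Σ_{V∈Θ} φ_V(z) conj(w(V))
(cz+d)^{−k'}` converges absolutely on ℍ and `Ψ ∈ 𝒫`. -/
theorem poincare_series_converges_and_mem_P
    (Γ : Subgroup SL2Z) (hΓ : Γ.FiniteIndex)
    (k : ℝ) (v : Γ → ℂ) (hv : IsMultiplier Γ k v)
    (lam : ℤ) (hlam : 0 < lam) (S : Γ) (hS : IsTranslationOf (S : SL2Z) lam)
    (t : ℕ) (Q : Fin (t + 1) → Γ) (hQ0 : Q 0 = S)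
    (hQpar : ∀ h : Fin (t + 1), IsParabolicMat ((Q h : Γ) : SL2Z))
    (φ : Γ → ℂ → ℂ) (hφ : IsCocycle Γ k v φ)
    (hφpar : ∀ h : Fin (t + 1), IsParabolicAt Γ k v φ (Q h))
    (hφS : φ S = 0)
    (k' : ℕ) (hk'pos : 0 < k') (hk'even : Even k')
    (w : Γ → ℂ) (hw : IsMultiplier Γ (k' : ℝ) w)
    (K α : ℝ) (hK : 0 < K)
    (hwbd : ∀ V : Γ, ‖w V‖ ≤ K * ((muSL (V : SL2Z) : ℤ) : ℝ) ^ α)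
    (Θ : Set Γ)
    (hΘ : ∀ V : Γ, ∃! W : Γ, W ∈ Θ ∧ V * W⁻¹ ∈ Subgroup.zpowers S)
    (K₁ e : ℝ) (hK₁ : 0 < K₁) (he : 0 < e)
    (hest : ∀ V ∈ Θ, ∀ z : ℂ, 0 < z.im →
      ‖φ V z * conj (w V) * ppow (denom (V : SL2Z) z) (-(k' : ℝ))‖ ≤
        K₁ * ((((entry (V : SL2Z) 1 0) ^ 2 + (entry (V : SL2Z) 1 1) ^ 2 : ℤ)) : ℝ) ^
            (e + 1 + α - (k' : ℝ) / 2) *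
          (‖z‖ ^ (6 * e - 2 * k) + z.im ^ (-(6 * e - 2 * k))))
    (hψ : 2 * e + 4 + 2 * α < (k' : ℝ)) :
    (∀ z : ℂ, 0 < z.im →
      Summable (fun V : Θ =>
        ‖φ (V : Γ) z * conj (w (V : Γ)) *
          ppow (denom ((V : Γ) : SL2Z) z) (-(k' : ℝ))‖)) ∧
    MemP (poincareSeries Γ Θ w (k' : ℝ) φ) :=
  poincare_series_converges_and_mem_P_general Γ k v lam hlam S hS φ hφ k' w α Θ hΘ K₁ e hK₁ hest hψ
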